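/- In a good bowtie-free graph, the centre of any vertex v (the set of vertices lying in two or more triangles and in the same E_0-component as v, where E_0 is the set of triangle edges) is either a single edge (two adjacent vertices) or the vertex set of a K4. -/

import Mathlib

/-!
Suppose an edge `wx` has two distinct common neighbours `p, q` (a diamond, induced if `p ≁ q`).
Bowtie-freeness forces any two
triangles through a common vertex to share a second vertex. If `p ~ q`, it follows that every
triangle through a vertex of the `K₄` on `{w, x, p, q}` lies inside it, so the `E₀`-component
of `w` is this `K₄`, each of whose vertices lies in three triangles. If `p ≁ q`, every triangle
through `w` or `x` contains the edge `wx`; the `E₀`-component of `w` then consists of `w`, `x`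
and their common neighbours, and each common neighbour lies in only one triangle. In a good
graph every vertex is `E₀`-reachable from such an edge: a `K₄` contains a `C₂`, and every
vertex of a chimney is `E₀`-adjacent to its central edge.
-/

/-- A triangle in a graph: a set of 3 pairwise adjacent vertices. -/
def IsTriangle {V : Type*} (G : SimpleGraph V) (t : Finset V) : Prop :=
  t.card = 3 ∧ ∀ u ∈ t, ∀ v ∈ t, u ≠ v → G.Adj u v

/-- `G` contains a bowtie (two triangles sharing exactly one vertex) as a
not-necessarily-induced subgraph. -/
def HasBowtie {V : Type*} (G : SimpleGraph V) : Prop :=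
  ∃ a b c d e : V, a ≠ b ∧ a ≠ c ∧ a ≠ d ∧ a ≠ e ∧ b ≠ c ∧ b ≠ d ∧ b ≠ e ∧
    c ≠ d ∧ c ≠ e ∧ d ≠ e ∧
    G.Adj a b ∧ G.Adj a c ∧ G.Adj b c ∧ G.Adj a d ∧ G.Adj a e ∧ G.Adj d e

/-- The `n`-chimney: vertices `inl 0 = u_L`, `inl 1 = u_R` forming the central edge,
and `inr i = v_i` each adjacent to both `u_L` and `u_R`, with no other edges. -/
def chimney (n : ℕ) : SimpleGraph (Fin 2 ⊕ Fin n) where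
  Adj u v := u ≠ v ∧ (u.isLeft ∨ v.isLeft)
  symm := ⟨fun _ _ h => ⟨h.1.symm, h.2.symm⟩⟩
  loopless := ⟨fun _ h => h.1 rfl⟩

/-- `v` lies in a (not necessarily induced) copy of `H` inside `G`. -/
def InCopy {W V : Type*} (H : SimpleGraph W) (G : SimpleGraph V) (v : V) : Prop :=
  ∃ f : W ↪ V, (∀ a b, H.Adj a b → G.Adj (f a) (f b)) ∧ v ∈ Set.range f

/-- A graph is good if every vertex is contained in a copy of a chimney `C_n` (`n ≥ 2`)
or of `K₄`. -/
def GoodGraph {V : Type*} (G : SimpleGraph V) : Prop :=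
  ∀ v : V, (∃ n, 2 ≤ n ∧ InCopy (chimney n) G v) ∨ InCopy (⊤ : SimpleGraph (Fin 4)) G v

/-- The subgraph of `G` consisting of the edges lying in some triangle. -/
def triEdges {V : Type*} (G : SimpleGraph V) : SimpleGraph V where
  Adj u v := G.Adj u v ∧ ∃ w, G.Adj u w ∧ G.Adj v w
  symm := ⟨fun _ _ h => ⟨h.1.symm, h.2.choose, h.2.choose_spec.2, h.2.choose_spec.1⟩⟩
  loopless := ⟨fun _ h => G.loopless.irrefl _ h.1⟩

/-- `w` lies in at least two triangles of `G`. -/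
def InTwoTriangles {V : Type*} (G : SimpleGraph V) (w : V) : Prop :=
  ∃ t₁ t₂ : Finset V, t₁ ≠ t₂ ∧ IsTriangle G t₁ ∧ IsTriangle G t₂ ∧ w ∈ t₁ ∧ w ∈ t₂

def centre {V : Type*} (G : SimpleGraph V) (v : V) : Set V :=
  {w | (triEdges G).Reachable v w ∧ InTwoTriangles G w}

theorem SimpleGraph.Reachable.mem_of_forall_adj_mem {V : Type*} {H : SimpleGraph V} {S : Set V}
    (hS : ∀ a b, a ∈ S → H.Adj a b → b ∈ S) {a b : V} (h : H.Reachable a b) (ha : a ∈ S) :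
    b ∈ S := by
  obtain ⟨p⟩ := h
  induction p with
  | nil => exact ha
  | cons hadj _ ih => exact ih (hS _ _ ha hadj)

section

variable {V : Type*} {G : SimpleGraph V}

theorem isTriangle_of_adj [DecidableEq V] {a b c : V} (hab : G.Adj a b) (hac : G.Adj a c)
    (hbc : G.Adj b c) : IsTriangle G {a, b, c} := by
  refine ⟨Finset.card_eq_three.mpr ⟨a, b, c, hab.ne, hac.ne, hbc.ne, rfl⟩, ?_⟩
  simp only [Finset.mem_insert, Finset.mem_singleton]
  rintro u (rfl | rfl | rfl) v (rfl | rfl | rfl) huv <;>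
    first | exact absurd rfl huv | assumption | symm; assumption

theorem IsTriangle.exists_eq_insert [DecidableEq V] {t : Finset V} {w : V}
    (ht : IsTriangle G t) (hw : w ∈ t) :
    ∃ y z, G.Adj w y ∧ G.Adj w z ∧ G.Adj y z ∧ t = {w, y, z} := by
  obtain ⟨a, b, c, hab, hac, hbc, rfl⟩ := Finset.card_eq_three.mp ht.1
  have adj {u v : V} (hu : u ∈ ({a, b, c} : Finset V)) (hv : v ∈ ({a, b, c} : Finset V))
      (huv : u ≠ v) : G.Adj u v := ht.2 u hu v hv huv
  simp only [Finset.mem_insert, Finset.mem_singleton] at hw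
  rcases hw with rfl | rfl | rfl
  · exact ⟨b, c, adj (by simp) (by simp) hab, adj (by simp) (by simp) hac,
      adj (by simp) (by simp) hbc, rfl⟩
  · exact ⟨a, c, adj (by simp) (by simp) hab.symm, adj (by simp) (by simp) hbc,
      adj (by simp) (by simp) hac, Finset.insert_comm _ _ _⟩
  · exact ⟨a, b, adj (by simp) (by simp) hac.symm, adj (by simp) (by simp) hbc.symm,
      adj (by simp) (by simp) hab,
      by ext; simp only [Finset.mem_insert, Finset.mem_singleton]; tauto⟩

theorem inTwoTriangles_of_two_common_neighbors {a b c d : V} (hab : G.Adj a b)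
    (hac : G.Adj a c) (hbc : G.Adj b c) (had : G.Adj a d) (hbd : G.Adj b d) (hcd : c ≠ d) :
    InTwoTriangles G a := by
  classical
  refine ⟨{a, b, c}, {a, b, d}, fun h => ?_, isTriangle_of_adj hab hac hbc,
    isTriangle_of_adj hab had hbd, by simp, by simp⟩
  have hc : c ∈ ({a, b, d} : Finset V) := h ▸ by simp
  simp only [Finset.mem_insert, Finset.mem_singleton] at hc
  rcases hc with rfl | rfl | rfl
  exacts [hac.ne rfl, hbc.ne rfl, hcd rfl]

theorem centre_eq_of_reachable {v w : V} (h : (triEdges G).Reachable v w) :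
    centre G v = centre G w := by
  ext u
  exact and_congr_left fun _ => ⟨h.symm.trans, h.trans⟩

theorem triangles_meet_of_not_hasBowtie (hbf : ¬ HasBowtie G) {w b c d e : V}
    (hbc : G.Adj b c) (hde : G.Adj d e) (hwb : G.Adj w b) (hwc : G.Adj w c)
    (hwd : G.Adj w d) (hwe : G.Adj w e) : b = d ∨ b = e ∨ c = d ∨ c = e := by
  by_contra! h
  obtain ⟨hbd, hbe, hcd, hce⟩ := h
  exact hbf ⟨w, b, c, d, e, hwb.ne, hwc.ne, hwd.ne, hwe.ne, hbc.ne, hbd, hbe, hcd, hce, hde.ne,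
    hwb, hwc, hbc, hwd, hwe, hde⟩

theorem eq_or_eq_or_eq_of_triangle_of_K4 (hbf : ¬ HasBowtie G) {a b c d y z : V}
    (hab : G.Adj a b) (hac : G.Adj a c) (had : G.Adj a d) (hbc : G.Adj b c)
    (hbd : G.Adj b d) (hcd : G.Adj c d) (hay : G.Adj a y) (haz : G.Adj a z)
    (hyz : G.Adj y z) : y = b ∨ y = c ∨ y = d := by
  -- otherwise `z` alone would have to meet each of `{b, c}`, `{b, d}` and `{c, d}`
  by_contra! hy
  have hbc' := triangles_meet_of_not_hasBowtie hbf hyz hbc hay haz hab hac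
  have hbd' := triangles_meet_of_not_hasBowtie hbf hyz hbd hay haz hab had
  have hcd' := triangles_meet_of_not_hasBowtie hbf hyz hcd hay haz hac had
  grind [hbc.ne, hbd.ne, hcd.ne]

theorem centre_eq_of_K4 (hbf : ¬ HasBowtie G) {a b c d : V}
    (hab : G.Adj a b) (hac : G.Adj a c) (had : G.Adj a d) (hbc : G.Adj b c)
    (hbd : G.Adj b d) (hcd : G.Adj c d) : centre G a = {a, b, c, d} := by
  have closed : ∀ u u', u ∈ ({a, b, c, d} : Set V) → (triEdges G).Adj u u' →
      u' ∈ ({a, b, c, d} : Set V) := by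
    rintro u u' hu ⟨huu', z, huz, hu'z⟩
    simp only [Set.mem_insert_iff, Set.mem_singleton_iff] at hu ⊢
    rcases hu with rfl | rfl | rfl | rfl
    · have := eq_or_eq_or_eq_of_triangle_of_K4 hbf
        hab hac had hbc hbd hcd huu' huz hu'z; tauto
    · have := eq_or_eq_or_eq_of_triangle_of_K4 hbf
        hab.symm hbc hbd hac had hcd huu' huz hu'z; tauto
    · have := eq_or_eq_or_eq_of_triangle_of_K4 hbf
        hac.symm hbc.symm hcd hab had hbd huu' huz hu'z; tauto
    · have := eq_or_eq_or_eq_of_triangle_of_K4 hbf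
        had.symm hbd.symm hcd.symm hab hac hbc huu' huz hu'z; tauto
  ext u
  refine ⟨fun hu => hu.1.mem_of_forall_adj_mem closed (by simp), ?_⟩
  simp only [Set.mem_insert_iff, Set.mem_singleton_iff]
  rintro (rfl | rfl | rfl | rfl)
  · exact ⟨.rfl, inTwoTriangles_of_two_common_neighbors hab hac hbc had hbd hcd.ne⟩
  · exact ⟨SimpleGraph.Adj.reachable ⟨hab, c, hac, hbc⟩,
      inTwoTriangles_of_two_common_neighbors hab.symm hbc hac hbd had hcd.ne⟩
  · exact ⟨SimpleGraph.Adj.reachable ⟨hac, b, hab, hbc.symm⟩,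
      inTwoTriangles_of_two_common_neighbors hac.symm hbc.symm hab hcd had hbd.ne⟩
  · exact ⟨SimpleGraph.Adj.reachable ⟨had, b, hab, hbd.symm⟩,
      inTwoTriangles_of_two_common_neighbors had.symm hbd.symm hab hcd.symm hac hbc.ne⟩

variable {w x p q : V}

theorem eq_or_eq_of_triangle_of_induced_diamond (hbf : ¬ HasBowtie G) (hwx : G.Adj w x)
    (hwp : G.Adj w p) (hxp : G.Adj x p) (hwq : G.Adj w q) (hxq : G.Adj x q) (hpq : p ≠ q)
    (hnpq : ¬ G.Adj p q) {y z : V} (hwy : G.Adj w y) (hwz : G.Adj w z) (hyz : G.Adj y z) :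
    y = x ∨ z = x := by
  -- otherwise `{y, z}` meets `{x, p}` in `p` and `{x, q}` in `q`, so `y z` is the non-edge `p q`
  by_contra! hx
  have hp := triangles_meet_of_not_hasBowtie hbf hyz hxp hwy hwz hwx hwp
  have hq := triangles_meet_of_not_hasBowtie hbf hyz hxq hwy hwz hwx hwq
  grind [G.adj_comm]

theorem eq_and_eq_of_triangle_of_common_neighbor (hbf : ¬ HasBowtie G) (hwx : G.Adj w x)
    (hwp : G.Adj w p) (hxp : G.Adj x p) (hwq : G.Adj w q) (hxq : G.Adj x q) (hpq : p ≠ q)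
    (hnpq : ¬ G.Adj p q) {r y z : V} (hwr : G.Adj w r) (hxr : G.Adj x r) (hry : G.Adj r y)
    (hrz : G.Adj r z) (hyz : G.Adj y z) : (y = w ∧ z = x) ∨ (y = x ∧ z = w) := by
  have at_w {y z : V} : G.Adj w y → G.Adj w z → G.Adj y z → y = x ∨ z = x :=
    eq_or_eq_of_triangle_of_induced_diamond hbf hwx hwp hxp hwq hxq hpq hnpq
  have at_x {y z : V} : G.Adj x y → G.Adj x z → G.Adj y z → y = w ∨ z = w :=
    eq_or_eq_of_triangle_of_induced_diamond hbf hwx.symm hxp hwp hxq hwq hpq hnpq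
  rcases triangles_meet_of_not_hasBowtie hbf hyz hwx hry hrz hwr.symm hxr.symm
    with rfl | rfl | rfl | rfl
  · grind [at_w hwr hyz hrz, hxr.ne]
  · grind [at_x hxr hyz hrz, hwr.ne]
  · grind [at_w hwr hyz.symm hry, hxr.ne]
  · grind [at_x hxr hyz.symm hry, hwr.ne]

theorem centre_eq_of_induced_diamond (hbf : ¬ HasBowtie G) (hwx : G.Adj w x)
    (hwp : G.Adj w p) (hxp : G.Adj x p) (hwq : G.Adj w q) (hxq : G.Adj x q) (hpq : p ≠ q)
    (hnpq : ¬ G.Adj p q) : centre G w = {w, x} := by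
  classical
  have at_w {y z : V} : G.Adj w y → G.Adj w z → G.Adj y z → y = x ∨ z = x :=
    eq_or_eq_of_triangle_of_induced_diamond hbf hwx hwp hxp hwq hxq hpq hnpq
  have at_x {y z : V} : G.Adj x y → G.Adj x z → G.Adj y z → y = w ∨ z = w :=
    eq_or_eq_of_triangle_of_induced_diamond hbf hwx.symm hxp hwp hxq hwq hpq hnpq
  have at_common {r y z : V} (hwr : G.Adj w r) (hxr : G.Adj x r) (hry : G.Adj r y)
      (hrz : G.Adj r z) (hyz : G.Adj y z) : (y = w ∧ z = x) ∨ (y = x ∧ z = w) :=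
    eq_and_eq_of_triangle_of_common_neighbor hbf hwx hwp hxp hwq hxq hpq hnpq hwr hxr hry
      hrz hyz
  have closed : ∀ u u', u ∈ {u | u = w ∨ u = x ∨ (G.Adj w u ∧ G.Adj x u)} →
      (triEdges G).Adj u u' → u' ∈ {u | u = w ∨ u = x ∨ (G.Adj w u ∧ G.Adj x u)} := by
    rintro u u' (rfl | rfl | ⟨hwu, hxu⟩) ⟨huu', z, huz, hu'z⟩
    · rcases at_w huu' huz hu'z with rfl | rfl
      exacts [Or.inr (Or.inl rfl), Or.inr (Or.inr ⟨huu', hu'z.symm⟩)]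
    · rcases at_x huu' huz hu'z with rfl | rfl
      exacts [Or.inl rfl, Or.inr (Or.inr ⟨hu'z.symm, huu'⟩)]
    · rcases at_common hwu hxu huu' huz hu'z with ⟨rfl, -⟩ | ⟨rfl, -⟩
      exacts [Or.inl rfl, Or.inr (Or.inl rfl)]
  have one_triangle {r : V} (hwr : G.Adj w r) (hxr : G.Adj x r) {t : Finset V}
      (ht : IsTriangle G t) (hr : r ∈ t) : t = {r, w, x} := by
    obtain ⟨y, z, hry, hrz, hyz, rfl⟩ := ht.exists_eq_insert hr
    rcases at_common hwr hxr hry hrz hyz with ⟨rfl, rfl⟩ | ⟨rfl, rfl⟩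
    · rfl
    · rw [Finset.pair_comm]
  ext u
  constructor
  · rintro ⟨hwu, t₁, t₂, hne, ht₁, ht₂, hu₁, hu₂⟩
    rcases hwu.mem_of_forall_adj_mem closed (Or.inl rfl) with rfl | rfl | ⟨hwu, hxu⟩
    · exact Or.inl rfl
    · exact Or.inr rfl
    · exact absurd ((one_triangle hwu hxu ht₁ hu₁).trans (one_triangle hwu hxu ht₂ hu₂).symm)
        hne
  · rintro (rfl | rfl)
    · exact ⟨.rfl, inTwoTriangles_of_two_common_neighbors hwx hwp hxp hwq hxq hpq⟩
    · exact ⟨SimpleGraph.Adj.reachable ⟨hwx, p, hwp, hxp⟩,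
        inTwoTriangles_of_two_common_neighbors hwx.symm hxp hwp hxq hwq hpq⟩

theorem centre_eq_edge_or_K4 (hbf : ¬ HasBowtie G) (hwx : G.Adj w x)
    (hwp : G.Adj w p) (hxp : G.Adj x p) (hwq : G.Adj w q) (hxq : G.Adj x q) (hpq : p ≠ q) :
    (∃ a b : V, a ≠ b ∧ G.Adj a b ∧ centre G w = {a, b}) ∨
      (∃ s : Finset V, s.card = 4 ∧ (∀ a ∈ s, ∀ b ∈ s, a ≠ b → G.Adj a b) ∧
        centre G w = ↑s) := by
  classical
  by_cases hadj : G.Adj p q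
  · refine Or.inr ⟨{w, x, p, q}, ?_, ?_,
      by simp [centre_eq_of_K4 hbf hwx hwp hwq hxp hxq hadj]⟩
    · simp [Finset.card_insert_of_notMem, hwx.ne, hwp.ne, hwq.ne, hxp.ne, hxq.ne, hpq]
    · simp only [Finset.mem_insert, Finset.mem_singleton]
      rintro a (rfl | rfl | rfl | rfl) b (rfl | rfl | rfl | rfl) hab <;>
        first | exact absurd rfl hab | assumption | symm; assumption
  · exact Or.inl ⟨w, x, hwx.ne, hwx,
      centre_eq_of_induced_diamond hbf hwx hwp hxp hwq hxq hpq hadj⟩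

theorem InCopy.chimney_two_of_top {v : V} (h : InCopy (⊤ : SimpleGraph (Fin 4)) G v) :
    InCopy (chimney 2) G v := by
  obtain ⟨f, hf, s, rfl⟩ := h
  refine ⟨finSumFinEquiv.toEmbedding.trans f, fun a b hab => hf _ _ ?_,
    finSumFinEquiv.symm s, by simp⟩
  simpa using finSumFinEquiv.injective.ne hab.1

theorem InCopy.exists_reachable_diamond_of_chimney {n : ℕ} (hn : 2 ≤ n) {v : V}
    (h : InCopy (chimney n) G v) :
    ∃ w x p q, G.Adj w x ∧ G.Adj w p ∧ G.Adj x p ∧ G.Adj w q ∧ G.Adj x q ∧ p ≠ q ∧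
      (triEdges G).Reachable v w := by
  obtain ⟨f, hf, s, rfl⟩ := h
  have adj (a b) (hab : a ≠ b) (hleft : a.isLeft ∨ b.isLeft) : G.Adj (f a) (f b) :=
    hf a b ⟨hab, hleft⟩
  have h01 := adj (.inl 0) (.inl 1) (by simp) (by simp)
  have hp0 := adj (.inl 0) (.inr ⟨0, by omega⟩) (by simp) (by simp)
  have hp1 := adj (.inl 1) (.inr ⟨0, by omega⟩) (by simp) (by simp)
  refine ⟨_, _, _, _, h01, hp0, hp1, adj (.inl 0) (.inr ⟨1, by omega⟩) (by simp) (by simp),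
    adj (.inl 1) (.inr ⟨1, by omega⟩) (by simp) (by simp), f.injective.ne (by simp), ?_⟩
  rcases s with i | j
  · fin_cases i
    · exact .rfl
    · exact SimpleGraph.Adj.reachable ⟨h01.symm, _, hp1, hp0⟩
  · exact SimpleGraph.Adj.reachable ⟨adj (.inr j) (.inl 0) (by simp) (by simp), _,
      adj (.inr j) (.inl 1) (by simp) (by simp), h01⟩

end

theorem goodGraph_vertex_centre_general {V : Type*} (G : SimpleGraph V)
    (hbf : ¬ HasBowtie G) (hg : GoodGraph G) (v : V) :
    (∃ a b : V, a ≠ b ∧ G.Adj a b ∧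
        {w | (triEdges G).Reachable v w ∧ InTwoTriangles G w} = {a, b}) ∨
      (∃ s : Finset V, s.card = 4 ∧ (∀ a ∈ s, ∀ b ∈ s, a ≠ b → G.Adj a b) ∧
        {w | (triEdges G).Reachable v w ∧ InTwoTriangles G w} = ↑s) := by
  obtain ⟨n, hn, hcopy⟩ : ∃ n, 2 ≤ n ∧ InCopy (chimney n) G v :=
    (hg v).elim id fun hK4 => ⟨2, le_rfl, hK4.chimney_two_of_top⟩
  obtain ⟨w, x, p, q, hwx, hwp, hxp, hwq, hxq, hpq, hvw⟩ :=
    hcopy.exists_reachable_diamond_of_chimney hn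
  have key := centre_eq_edge_or_K4 hbf hwx hwp hxp hwq hxq hpq
  rw [← centre_eq_of_reachable hvw] at key
  exact key

/-- In a good bowtie-free graph, the centre of any vertex `v` (the vertices lying in
two or more triangles within the `triEdges`-component of `v`) is either a single edge
or the vertex set of a `K₄`. -/
theorem goodGraph_vertex_centre {V : Type*} [DecidableEq V] (G : SimpleGraph V)
    (hbf : ¬ HasBowtie G) (hg : GoodGraph G) (v : V) :
    (∃ a b : V, a ≠ b ∧ G.Adj a b ∧
        {w | (triEdges G).Reachable v w ∧ InTwoTriangles G w} = {a, b}) ∨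
      (∃ s : Finset V, s.card = 4 ∧ (∀ a ∈ s, ∀ b ∈ s, a ≠ b → G.Adj a b) ∧
        {w | (triEdges G).Reachable v w ∧ InTwoTriangles G w} = ↑s) :=
  goodGraph_vertex_centre_general G hbf hg v
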